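/- arXiv:1202.3597 — 2 statements merged into one kernel-verified Lean document; each statement's English description precedes it below -/
import Mathlib

section
/- Let R be a commutative Noetherian regular ring with unity containing a field F of characteristic 0 such that R is equidimensional of dimension n (every maximal ideal has height n) and every residue field R/m at a maximal ideal m is an algebraic extension of F. Suppose there exist F-linear derivations ∂₁, …, ∂_n of R and elements a₁, …, a_n ∈ R such that ∂ᵢ(aⱼ) = 1 if i = j and ∂ᵢ(aⱼ) = 0 if i ≠ j. Then Der_F(R) is a finitely generated projective R-module of rank n, and for every maximal ideal m of R the canonical map R_m ⊗_R Der_F(R) → Der_F(R_m) is an isomorphism; that is, R satisfies Hypothesis H over F. -/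
/-- A Noetherian local ring is *regular* if its Krull dimension equals the dimension of its
cotangent space (the minimal number of generators of the maximal ideal). -/
def IsRegularLocal (A : Type*) [CommRing A] [IsLocalRing A] : Prop :=
  IsNoetherianRing A ∧
    ringKrullDim A =
      Module.finrank (IsLocalRing.ResidueField A) (IsLocalRing.CotangentSpace A)

/-- A commutative ring is *regular* if all of its localizations at primes are regular local. -/
def IsRegularRing' (R : Type*) [CommRing R] : Prop :=
  ∀ (P : Ideal R) (_ : P.IsPrime), IsRegularLocal (Localization.AtPrime P)

/-- Hypothesis H: `R` is a commutative Noetherian regular ring containing a field `F` of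
characteristic `0` such that (1) `R` is equidimensional of dimension `n`, (2) every residue
field at a maximal ideal is algebraic over `F`, and (3) `Der_F(R)` is a finitely generated
projective `R`-module of rank `n` whose localization at every maximal ideal `m` is the module
of `F`-linear derivations of `R_m` (via the canonical map). -/
structure HypothesisH (F : Type*) (R : Type*) [Field F] [CommRing R] [Algebra F R]
    (n : ℕ) : Prop where
  charZero : CharZero F
  noetherian : IsNoetherianRing R
  regular : IsRegularRing' R
  equidim : ∀ (m : Ideal R) (_ : m.IsMaximal), ringKrullDim (Localization.AtPrime m) = n
  residue_algebraic : ∀ (m : Ideal R) (_ : m.IsMaximal), Algebra.IsAlgebraic F (R ⧸ m)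
  der_finite : Module.Finite R (Derivation F R R)
  der_projective : Module.Projective R (Derivation F R R)
  der_free_rank : ∀ (m : Ideal R) (_ : m.IsMaximal),
    Module.Free (Localization.AtPrime m) (LocalizedModule m.primeCompl (Derivation F R R)) ∧
      Module.finrank (Localization.AtPrime m)
        (LocalizedModule m.primeCompl (Derivation F R R)) = n
  der_localize : ∀ (m : Ideal R) (_ : m.IsMaximal),
    ∃ g : Derivation F R R →ₗ[R]
        Derivation F (Localization.AtPrime m) (Localization.AtPrime m),
      (∀ (δ : Derivation F R R) (r : R),
          g δ (algebraMap R (Localization.AtPrime m) r)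
            = algebraMap R (Localization.AtPrime m) (δ r)) ∧
        IsLocalizedModule m.primeCompl g

/-!
Let `A = R_m` and let `d` be an `F`-derivation of `A` killing the `aᵢ`. As the residue field is
separable over `F`, Newton's method yields, for every `t`, elements `bᵢ ≡ aᵢ (mod m)` that every
derivation maps into `m ^ t`. The `xᵢ = aᵢ - bᵢ` are dual to the `∂ᵢ` modulo `m`, hence linearly
independent in `m/m²`, which has dimension `n` by regularity, so they generate `m`. Induction on
`t` then gives `d(A) ⊆ m ^ t` for all `t`, and `d = 0` by Krull's intersection theorem. Thus
`δ ↦ (δ aᵢ)ᵢ` is injective on `Der_F(R)` and on every `Der_F(R_m)`, the `∂ᵢ` are bases of both, and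
extending derivations to `R_m` maps the first basis to the second.
-/

open Polynomial IsLocalRing Module

namespace Derivation

variable {R A : Type*} [CommRing R] [CommRing A] [Algebra R A] (d : Derivation R A A)

theorem map_mem_pow_of_mem_pow_succ {I : Ideal A} {k : ℕ} {v : A} (hv : v ∈ I ^ (k + 1)) :
    d v ∈ I ^ k := by
  induction k generalizing v with
  | zero => simp
  | succ k ih =>
    rw [pow_succ'] at hv
    refine Submodule.mul_induction_on hv (fun x hx y hy => ?_)
      (fun _ _ hx hy => by rw [map_add]; exact add_mem hx hy)
    rw [leibniz, smul_eq_mul, smul_eq_mul]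
    exact add_mem (pow_succ' I k ▸ Ideal.mul_mem_mul hx (ih hy)) (Ideal.mul_mem_right _ _ hy)

theorem map_mem_pow_of_aeval_mem_pow_succ {I : Ideal A} {k : ℕ} {p : R[X]} {b : A}
    (hp : aeval b p ∈ I ^ (k + 1)) (hp' : IsUnit (aeval b (derivative p))) : d b ∈ I ^ k := by
  have := d.map_mem_pow_of_mem_pow_succ hp
  rwa [map_aeval, smul_eq_mul, Ideal.unit_mul_mem_iff_mem _ hp'] at this

theorem map_mem_pow_succ_of_span_eq {I : Ideal A} {s : Set A} (hs : Ideal.span s = I) {t : ℕ}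
    (hd : ∀ y, d y ∈ I ^ t) (hds : ∀ x ∈ s, d x ∈ I ^ (t + 1)) {u : A} (hu : u ∈ I) :
    d u ∈ I ^ (t + 1) := by
  rw [← hs] at hu
  induction hu using Submodule.span_induction with
  | mem x hx => exact hds x hx
  | zero => simp
  | add x y _ _ hx hy => rw [map_add]; exact add_mem hx hy
  | smul c x hx _ =>
    rw [smul_eq_mul, leibniz, smul_eq_mul, smul_eq_mul, pow_succ']
    exact add_mem (Ideal.mul_mem_left _ _ (by rwa [← pow_succ']))
      (Ideal.mul_mem_mul (hs ▸ hx) (hd c))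

theorem finset_sum_apply {ι : Type*} (s : Finset ι) (f : ι → Derivation R A A) (x : A) :
    (∑ i ∈ s, f i) x = ∑ i ∈ s, f i x := by
  simp only [← coeFnAddMonoidHom_apply, map_sum, Finset.sum_apply]

section Dual

variable {ι : Type*} [Fintype ι] [DecidableEq ι] (D : ι → Derivation R A A) (a : ι → A)
  (hD : ∀ i j, D i (a j) = if i = j then 1 else 0)
  (huniq : ∀ d : Derivation R A A, (∀ i, d (a i) = 0) → d = 0)

noncomputable def basisOfDual : Basis ι A (Derivation R A A) :=
  Basis.ofEquivFun
    { toFun d i := d (a i)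
      map_add' _ _ := rfl
      map_smul' _ _ := rfl
      invFun c := ∑ i, c i • D i
      left_inv d := by
        rw [← sub_eq_zero]
        refine huniq _ fun j => ?_
        simp [finset_sum_apply, hD]
      right_inv c := by
        funext j
        simp [finset_sum_apply, hD] }

@[simp]
theorem basisOfDual_apply (i : ι) : basisOfDual D a hD huniq i = D i := by
  simp [basisOfDual, Pi.single_apply]

end Dual

section Localization

variable {F R : Type*} [CommRing F] [CommRing R] (S : Submonoid R) (A : Type*) [CommRing A]
  [Algebra R A]

theorem ext_of_isLocalization [IsLocalization S A] [Algebra F A] {M : Type*} [AddCommGroup M]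
    [Module A M] [Module F M] {d₁ d₂ : Derivation F A M}
    (h : ∀ r, d₁ (algebraMap R A r) = d₂ (algebraMap R A r)) : d₁ = d₂ := by
  rw [← sub_eq_zero]
  ext x
  have he : ∀ r, (d₁ - d₂) (algebraMap R A r) = 0 := fun r => by simp [h]
  obtain ⟨⟨r, s⟩, hx⟩ := IsLocalization.surj S x
  have := congrArg (d₁ - d₂) hx
  rw [leibniz, he, he, smul_zero, zero_add] at this
  exact (IsLocalization.map_units A s).smul_eq_zero.mp this

variable [Algebra F R] [Algebra F A] [IsScalarTower F R A] [IsLocalization S A]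

noncomputable def extendOfIsLocalization (d : Derivation F R A) : Derivation F A A :=
  KaehlerDifferential.linearMapEquivDerivation F A
    (LinearMap.extendScalarsOfIsLocalization S A
      (IsLocalizedModule.lift S (KaehlerDifferential.map F F R A) d.liftKaehlerDifferential
        (IsLocalizedModule.map_units (Algebra.linearMap R A))))

@[simp]
theorem extendOfIsLocalization_algebraMap (d : Derivation F R A) (r : R) :
    d.extendOfIsLocalization S A (algebraMap R A r) = d r := by
  simp only [extendOfIsLocalization, KaehlerDifferential.linearMapEquivDerivation_apply_apply,
    LinearMap.extendScalarsOfIsLocalization_apply']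
  rw [← KaehlerDifferential.map_D F F R A r, IsLocalizedModule.lift_apply,
    liftKaehlerDifferential_comp_D]

noncomputable def mapLocalization : Derivation F R R →ₗ[R] Derivation F A A where
  toFun d := ((Algebra.linearMap R A).compDer d).extendOfIsLocalization S A
  map_add' d₁ d₂ := ext_of_isLocalization S A fun r => by simp
  map_smul' c d := ext_of_isLocalization S A fun r => by simp

@[simp]
theorem mapLocalization_apply_algebraMap (d : Derivation F R R) (r : R) :
    mapLocalization S A d (algebraMap R A r) = algebraMap R A (d r) :=
  extendOfIsLocalization_algebraMap S A _ r

end Localization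

theorem eq_zero_of_mapLocalization_eq_zero {F R : Type*} [CommRing F] [CommRing R] [Algebra F R]
    {d : Derivation F R R}
    (h : ∀ (m : Ideal R) [m.IsMaximal],
      mapLocalization m.primeCompl (Localization.AtPrime m) d = 0) :
    d = 0 := by
  ext r
  refine eq_zero_of_localization _ fun m _ => ?_
  rw [← mapLocalization_apply_algebraMap m.primeCompl, h m, zero_apply]

end Derivation

theorem IsLocalizedModule.of_basis {R : Type*} [CommRing R] (S : Submonoid R) (A : Type*)
    [CommRing A] [Algebra R A] [IsLocalization S A] {M M' : Type*} [AddCommGroup M] [Module R M]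
    [AddCommGroup M'] [Module R M'] [Module A M'] [IsScalarTower R A M'] {ι : Type*} [Finite ι]
    (f : M →ₗ[R] M') (b : Basis ι R M) (b' : Basis ι A M') (hf : ∀ i, f (b i) = b' i) :
    IsLocalizedModule S f := by
  let π : (ι → R) →ₗ[R] (ι → A) := LinearMap.pi fun i => Algebra.linearMap R A ∘ₗ LinearMap.proj i
  have : f = (b'.equivFun.symm.restrictScalars R).toLinearMap ∘ₗ π ∘ₗ b.equivFun.toLinearMap :=
    b.ext fun i => by
      classical
      simp only [LinearMap.coe_comp, Function.comp_apply, LinearEquiv.coe_coe,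
        LinearEquiv.restrictScalars_apply, hf]
      rw [LinearEquiv.eq_symm_apply]
      funext j
      simp [π, Basis.equivFun_self, Finsupp.single_apply]
  rw [this]
  have := IsLocalizedModule.of_linearEquiv_right S π b.equivFun
  exact IsLocalizedModule.of_linearEquiv S _ _

namespace IsLocalRing

variable {R A : Type*} [CommRing R] [CommRing A] [IsLocalRing A] [Algebra R A]

theorem residue_aeval (x : A) (p : R[X]) : residue A (aeval x p) = aeval (residue A x) p := by
  rw [← ResidueField.algebraMap_eq, aeval_algebraMap_apply]

theorem exists_residue_eq_aeval_mem_pow {p : R[X]} {a : A} (hp : aeval (residue A a) p = 0)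
    (hp' : aeval (residue A a) (derivative p) ≠ 0) (N : ℕ) :
    ∃ b, residue A b = residue A a ∧ aeval b p ∈ maximalIdeal A ^ (N + 1) := by
  let π := Ideal.Quotient.mkₐ R (maximalIdeal A ^ (N + 1))
  have hnil : IsNilpotent (aeval (π a) p) := by
    rw [aeval_algHom_apply]
    refine ⟨N + 1, ?_⟩
    rw [← map_pow, Ideal.Quotient.mkₐ_eq_mk, Ideal.Quotient.eq_zero_iff_mem]
    exact Ideal.pow_mem_pow ((residue_eq_zero_iff _).mp (by rw [residue_aeval, hp])) _
  have hunit : IsUnit (aeval (π a) (derivative p)) := by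
    rw [aeval_algHom_apply]
    exact ((residue_ne_zero_iff_isUnit _).mp (by rwa [residue_aeval])).map π
  obtain ⟨r, ⟨⟨k, hk⟩, hr⟩, -⟩ := existsUnique_nilpotent_sub_and_aeval_eq_zero hnil hunit
  obtain ⟨b, rfl⟩ := Ideal.Quotient.mkₐ_surjective R _ r
  refine ⟨b, ?_, ?_⟩
  · rw [eq_comm, ← sub_eq_zero, ← map_sub, residue_eq_zero_iff]
    refine (maximalIdeal.isMaximal A).isPrime.mem_of_pow_mem k (Ideal.pow_le_self N.succ_ne_zero ?_)
    rwa [← map_sub, ← map_pow, Ideal.Quotient.mkₐ_eq_mk, Ideal.Quotient.eq_zero_iff_mem] at hk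
  · rwa [aeval_algHom_apply, Ideal.Quotient.mkₐ_eq_mk, Ideal.Quotient.eq_zero_iff_mem] at hr

theorem residue_derivation_sum_mul (d : Derivation R A A) {ι : Type*} (s : Finset ι) (c : ι → A)
    {x : ι → A} (hx : ∀ i, x i ∈ maximalIdeal A) :
    residue A (d (∑ j ∈ s, c j * x j)) = ∑ j ∈ s, residue A (c j) * residue A (d (x j)) := by
  simp [Derivation.leibniz, (residue_eq_zero_iff _).mpr (hx _)]

theorem span_range_eq_maximalIdeal_of_derivations [IsNoetherianRing A] {ι : Type*} [Fintype ι]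
    [DecidableEq ι] (hcard : finrank (ResidueField A) (CotangentSpace A) = Fintype.card ι)
    (D : ι → Derivation R A A) {x : ι → A} (hx : ∀ i, x i ∈ maximalIdeal A)
    (hDx : ∀ i j, residue A (D i (x j)) = if i = j then 1 else 0) :
    Ideal.span (Set.range x) = maximalIdeal A := by
  let y : ι → maximalIdeal A := fun i => ⟨x i, hx i⟩
  have hli : LinearIndependent (ResidueField A) ((maximalIdeal A).toCotangent ∘ y) := by
    rw [Fintype.linearIndependent_iff]
    intro g hg i
    obtain ⟨c, rfl⟩ : ∃ c : ι → A, (fun j => residue A (c j)) = g :=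
      ⟨fun j => (residue_surjective (g j)).choose,
        funext fun j => (residue_surjective (g j)).choose_spec⟩
    have hsq : ∑ j, c j * x j ∈ maximalIdeal A ^ 2 := by
      have : ∑ j, residue A (c j) • (maximalIdeal A).toCotangent (y j) =
          (maximalIdeal A).toCotangent (∑ j, c j • y j) := by
        simp [← ResidueField.algebraMap_eq, algebraMap_smul]
      rw [Function.comp_def, this, Ideal.toCotangent_eq_zero] at hg
      simpa [y] using hg
    have := (D i).map_mem_pow_of_mem_pow_succ hsq
    rwa [pow_one, ← residue_eq_zero_iff, residue_derivation_sum_mul _ _ _ hx,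
      Finset.sum_eq_single i (fun j _ hji => by simp [hDx, Ne.symm hji]) (by simp),
      hDx, if_pos rfl, mul_one] at this
  have hspan := CotangentSpace.span_image_eq_top_iff.mp
    (Set.range_comp _ y ▸ hli.span_eq_top_of_card_eq_finrank' hcard.symm)
  rw [Ideal.span, show Set.range x = (maximalIdeal A).subtype '' Set.range y by
      rw [← Set.range_comp]; rfl,
    ← Submodule.map_span, hspan, Submodule.map_top, Submodule.range_subtype]

variable {F : Type*} [Field F] [Algebra F A] [Algebra.IsSeparable F (ResidueField A)]

theorem exists_residue_eq_forall_derivation_mem_pow (a : A) (k : ℕ) :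
    ∃ b, residue A b = residue A a ∧ ∀ d : Derivation F A A, d b ∈ maximalIdeal A ^ k := by
  have hsep := Algebra.IsSeparable.isSeparable F (residue A a)
  have hp : aeval (residue A a) (minpoly F (residue A a)) = 0 := minpoly.aeval _ _
  obtain ⟨b, hba, hb⟩ := exists_residue_eq_aeval_mem_pow hp (hsep.aeval_derivative_ne_zero hp) k
  refine ⟨b, hba, fun d => d.map_mem_pow_of_aeval_mem_pow_succ hb ?_⟩
  rw [← residue_ne_zero_iff_isUnit, residue_aeval, hba]
  exact hsep.aeval_derivative_ne_zero hp

theorem derivation_eq_zero_of_map_eq_zero [IsNoetherianRing A] {ι : Type*} [Fintype ι]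
    [DecidableEq ι] (hcard : finrank (ResidueField A) (CotangentSpace A) = Fintype.card ι)
    (D : ι → Derivation F A A) (a : ι → A) (hD : ∀ i j, D i (a j) = if i = j then 1 else 0)
    {d : Derivation F A A} (hd : ∀ i, d (a i) = 0) : d = 0 := by
  suffices h : ∀ t y, d y ∈ maximalIdeal A ^ t by
    ext y
    have := Ideal.mem_iInf.mpr (h · y)
    rwa [Ideal.iInf_pow_eq_bot_of_isLocalRing _ (maximalIdeal.isMaximal A).ne_top] at this
  intro t
  induction t with
  | zero => simp
  | succ t ih =>
    choose b hba hb using fun i =>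
      exists_residue_eq_forall_derivation_mem_pow (F := F) (a i) (t + 1)
    have hx : ∀ i, a i - b i ∈ maximalIdeal A := fun i => by
      rw [← residue_eq_zero_iff, map_sub, hba, sub_self]
    have hspan := span_range_eq_maximalIdeal_of_derivations hcard D hx fun i j => by
      rw [map_sub, map_sub, (residue_eq_zero_iff _).mpr (Ideal.pow_le_self t.succ_ne_zero (hb j _)),
        hD, sub_zero]
      split_ifs <;> simp
    have hm : ∀ u ∈ maximalIdeal A, d u ∈ maximalIdeal A ^ (t + 1) := fun u =>
      d.map_mem_pow_succ_of_span_eq hspan ih (by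
        rintro _ ⟨i, rfl⟩
        rw [map_sub, hd, zero_sub]
        exact neg_mem (hb i d))
    intro y
    obtain ⟨c, hcy, hc⟩ := exists_residue_eq_forall_derivation_mem_pow (F := F) y (t + 1)
    rw [← sub_add_cancel y c, map_add]
    exact add_mem (hm _ (by rw [← residue_eq_zero_iff, map_sub, hcy, sub_self])) (hc d)

end IsLocalRing

theorem isSeparable_residueField_localization {F R : Type*} [Field F] [CharZero F] [CommRing R]
    [Algebra F R] (m : Ideal R) [m.IsMaximal] [Algebra.IsAlgebraic F (R ⧸ m)] :
    Algebra.IsSeparable F (ResidueField (Localization.AtPrime m)) := by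
  have e : (R ⧸ m) ≃ₐ[F] ResidueField (Localization.AtPrime m) :=
    AlgEquiv.ofRingEquiv (f := IsLocalization.AtPrime.equivQuotMaximalIdeal m
      (Localization.AtPrime m)) fun x =>
        congrArg (residue _) (IsScalarTower.algebraMap_apply F R (Localization.AtPrime m) x).symm
  have := e.isAlgebraic
  exact Algebra.IsAlgebraic.isSeparable_of_perfectField

theorem derivation_localization_eq_zero_of_map_eq_zero {F R : Type*} [Field F] [CharZero F]
    [CommRing R] [Algebra F R] {n : ℕ} (hNoeth : IsNoetherianRing R) (hReg : IsRegularRing' R)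
    (m : Ideal R) [m.IsMaximal] (hdim : ringKrullDim (Localization.AtPrime m) = n)
    (hRes : Algebra.IsAlgebraic F (R ⧸ m)) (D : Fin n → Derivation F R R) (a : Fin n → R)
    (h : ∀ i j, D i (a j) = if i = j then 1 else 0)
    {d : Derivation F (Localization.AtPrime m) (Localization.AtPrime m)}
    (hd : ∀ i, d (algebraMap R _ (a i)) = 0) : d = 0 := by
  have := isSeparable_residueField_localization (F := F) m
  have hcard : finrank (ResidueField (Localization.AtPrime m))
      (CotangentSpace (Localization.AtPrime m)) = Fintype.card (Fin n) := by
    rw [Fintype.card_fin]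
    exact_mod_cast (hReg m inferInstance).2.symm.trans hdim
  exact derivation_eq_zero_of_map_eq_zero hcard
    (fun i => Derivation.mapLocalization m.primeCompl _ (D i)) (fun i => algebraMap R _ (a i))
    (fun i j => by simp [h, apply_ite]) hd

/-- Let `R` be a commutative Noetherian regular ring containing a field `F` of characteristic
`0`, equidimensional of dimension `n`, all of whose residue fields at maximal ideals are
algebraic over `F`.  If there are `F`-linear derivations `∂₁, …, ∂_n` of `R` and elements
`a₁, …, a_n ∈ R` with `∂ᵢ(aⱼ) = δᵢⱼ`, then `R` satisfies Hypothesis H over `F`:  `Der_F(R)` is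
a finitely generated projective `R`-module of rank `n`, and for every maximal ideal the
canonical map `R_m ⊗_R Der_F(R) → Der_F(R_m)` is an isomorphism. -/
theorem hypothesisH_of_exists_dual_derivations
    {F R : Type*} [Field F] [CharZero F] [CommRing R] [Algebra F R] {n : ℕ}
    (hNoeth : IsNoetherianRing R) (hReg : IsRegularRing' R)
    (hEquidim : ∀ (m : Ideal R) (_ : m.IsMaximal),
      ringKrullDim (Localization.AtPrime m) = n)
    (hRes : ∀ (m : Ideal R) (_ : m.IsMaximal), Algebra.IsAlgebraic F (R ⧸ m))
    (D : Fin n → Derivation F R R) (a : Fin n → R)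
    (h : ∀ i j, D i (a j) = if i = j then 1 else 0) :
    HypothesisH F R n := by
  have hloc : ∀ (m : Ideal R) [m.IsMaximal]
      (d : Derivation F (Localization.AtPrime m) (Localization.AtPrime m)),
      (∀ i, d (algebraMap R _ (a i)) = 0) → d = 0 :=
    fun m hm _ => derivation_localization_eq_zero_of_map_eq_zero hNoeth hReg m
      (hEquidim m hm) (hRes m hm) D a h
  have hdual : ∀ (m : Ideal R) [m.IsMaximal] (i j : Fin n),
      Derivation.mapLocalization m.primeCompl _ (D i) (algebraMap R (Localization.AtPrime m) (a j))
        = if i = j then 1 else 0 := fun m _ i j => by simp [h, apply_ite]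
  let b := Derivation.basisOfDual D a h fun d hd =>
    Derivation.eq_zero_of_mapLocalization_eq_zero fun m _ => hloc m _ fun i => by simp [hd]
  have hg : ∀ (m : Ideal R) [m.IsMaximal], IsLocalizedModule m.primeCompl
      (Derivation.mapLocalization m.primeCompl (Localization.AtPrime m)) :=
    fun m _ => .of_basis m.primeCompl _ _ b (Derivation.basisOfDual _ _ (hdual m) (hloc m))
      fun i => by simp [b]
  have := Module.Free.of_basis b
  refine ⟨‹_›, hNoeth, hReg, hEquidim, hRes, .of_basis b, inferInstance, fun m _ => ?_,
    fun m _ => ⟨_, Derivation.mapLocalization_apply_algebraMap m.primeCompl _, hg m⟩⟩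
  let bm := b.ofIsLocalizedModule (Localization.AtPrime m) m.primeCompl
    (LocalizedModule.mkLinearMap m.primeCompl _)
  exact ⟨.of_basis bm, by rw [finrank_eq_card_basis bm, Fintype.card_fin]⟩
end

section
/- Let R be a ring satisfying Hypothesis H over a field F of characteristic 0. For θ in the ring End_F(R) of F-linear endomorphisms of R and j ≥ 0, say that θ is a differential operator of order ≤ j if for all r₀, r₁, …, r_j ∈ R the iterated commutator [⋯[[θ, r₀], r₁]⋯, r_j] is zero, where r denotes the multiplication-by-r operator and [θ, r] = θ∘r − r∘θ. Then the set D(R, F) of all F-linear endomorphisms of R that are differential operators of some finite order equals the F-subalgebra D of End_F(R) generated by the multiplication operators by elements of R together with the F-linear derivations of R. -/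
/-- `θ : End_F(R)` is a differential operator of order at most `j` if all iterated commutators
`[⋯[[θ, r₀], r₁]⋯, r_j]` with `j + 1` multiplication operators vanish. -/
def IsDiffOpOfOrderLE (F R : Type*) [Field F] [CommRing R] [Algebra F R] :
    ℕ → Module.End F R → Prop
  | 0, θ => ∀ r : R, θ * LinearMap.mulLeft F r - LinearMap.mulLeft F r * θ = 0
  | (j + 1), θ => ∀ r : R,
      IsDiffOpOfOrderLE F R j (θ * LinearMap.mulLeft F r - LinearMap.mulLeft F r * θ)

/-!
The polarized symbol `v ↦ [⋯[θ, v₀]⋯, v_j](1)` of an operator `θ` of order `≤ j + 1` is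
symmetric in the `vᵢ` and an `F`-derivation in each of them. As `Der_F(R)` is finitely generated
projective, it has a finite dual basis `(fᵢ, gᵢ)`, so a multi-derivation splits in its first slot
as `φ(r, w) = ∑ gᵢ(r) ψᵢ(w)` with multi-derivations `ψᵢ` in one variable fewer; by induction, the
symmetrization `∑_σ φ(v ∘ σ)` is the symbol of a sum of products of derivations. For the symbol of
`θ` this symmetrization is `(j + 1)!` times the symbol itself, so in characteristic `0`,
subtracting `1 / (j + 1)!` times that operator from `θ` leaves an operator of order `≤ j`.
-/

open LinearMap (mulLeft)

theorem List.ofFn_perm_cons_removeNth {α : Type*} {n : ℕ} (v : Fin (n + 1) → α)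
    (i : Fin (n + 1)) : (List.ofFn v).Perm (v i :: List.ofFn (Fin.removeNth i v)) := by
  rw [← Multiset.coe_eq_coe, ← Fin.univ_val_map, ← Multiset.cons_coe, ← Fin.univ_val_map,
    Fin.univ_succAbove n i]
  simp only [Finset.cons_val, Multiset.map_cons, Finset.map_val, Multiset.map_map]
  rfl

theorem Fin.removeNth_succ_cons {α : Type*} {n : ℕ} (a : α) (w : Fin (n + 1) → α)
    (k : Fin (n + 1)) :
    Fin.removeNth k.succ (Fin.cons a w : Fin (n + 2) → α) = Fin.cons a (Fin.removeNth k w) := by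
  ext i
  refine Fin.cases ?_ (fun i => ?_) i <;>
    simp [Fin.removeNth_apply, Fin.succ_succAbove_succ]

theorem Module.Finite.exists_sum_smul_eq_of_projective (R M : Type*) [Semiring R]
    [AddCommMonoid M] [Module R M] [Module.Finite R M] [Module.Projective R M] :
    ∃ (n : ℕ) (f : Fin n → M →ₗ[R] R) (g : Fin n → M),
      ∀ x, ∑ i, f i x • g i = x := by
  classical
  obtain ⟨n, π, s, -, -, hπs⟩ := Module.Finite.exists_comp_eq_id_of_projective R M
  refine ⟨n, fun i => LinearMap.proj i ∘ₗ s, fun i => π fun k => if i = k then 1 else 0,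
    fun x => ?_⟩
  conv_rhs => rw [← LinearMap.id_apply (R := R) x, ← hπs, LinearMap.comp_apply,
    LinearMap.pi_apply_eq_sum_univ π]
  rfl

section Symmetrize

variable {α M : Type*} [AddCommMonoid M]

/-- `symmetrize j φ v = ∑_{σ ∈ Sⱼ} φ (v ∘ σ)`, organised by which entry of `v` comes first. -/
def symmetrize : (j : ℕ) → ((Fin j → α) → M) → (Fin j → α) → M
  | 0, φ => φ
  | j + 1, φ => fun v => ∑ k, symmetrize j (fun w => φ (Fin.cons (v k) w)) (Fin.removeNth k v)

theorem symmetrize_sum_smul {S ι : Type*} [Semiring S] [Module S M] {j : ℕ} (s : Finset ι)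
    (c : ι → S) (ψ : ι → (Fin j → α) → M) (v : Fin j → α) :
    symmetrize j (fun w => ∑ i ∈ s, c i • ψ i w) v =
      ∑ i ∈ s, c i • symmetrize j (ψ i) v := by
  induction j with
  | zero => rfl
  | succ j ih =>
    simp only [symmetrize, ih, Finset.smul_sum]
    exact Finset.sum_comm

end Symmetrize

section

variable {F R : Type*} [Field F] [CommRing R] [Algebra F R]

variable (F) in
def commutatorMulLeft : R →ₗ[F] Module.End F R →ₗ[F] Module.End F R :=
  LinearMap.mk₂ F (fun r θ => θ * Algebra.lmul F R r - Algebra.lmul F R r * θ)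
    (fun r s θ => by simp only [map_add]; noncomm_ring)
    (fun c r θ => by simp only [map_smul, mul_smul_comm, smul_mul_assoc, smul_sub])
    (fun r θ φ => by noncomm_ring)
    (fun c r θ => by simp only [mul_smul_comm, smul_mul_assoc, smul_sub])

@[simp]
theorem commutatorMulLeft_apply (r : R) (θ : Module.End F R) :
    commutatorMulLeft F r θ = θ * mulLeft F r - mulLeft F r * θ :=
  rfl

theorem commutatorMulLeft_mulLeft (r s : R) : commutatorMulLeft F r (mulLeft F s) = 0 := by
  ext x
  simp [mul_left_comm]

theorem commutatorMulLeft_mul (r : R) (θ φ : Module.End F R) :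
    commutatorMulLeft F r (θ * φ) =
      θ * commutatorMulLeft F r φ + commutatorMulLeft F r θ * φ := by
  simp only [commutatorMulLeft_apply, mul_sub, sub_mul, mul_assoc]
  abel

theorem commutatorMulLeft_mul_mulLeft (r s : R) (θ : Module.End F R) :
    commutatorMulLeft F r (θ * mulLeft F s) = commutatorMulLeft F r θ * mulLeft F s := by
  rw [commutatorMulLeft_mul, commutatorMulLeft_mulLeft, mul_zero, zero_add]

theorem commutatorMulLeft_mulLeft_mul (r s : R) (θ : Module.End F R) :
    commutatorMulLeft F r (mulLeft F s * θ) = mulLeft F s * commutatorMulLeft F r θ := by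
  rw [commutatorMulLeft_mul, commutatorMulLeft_mulLeft, zero_mul, add_zero]

theorem commutatorMulLeft_comm (r s : R) (θ : Module.End F R) :
    commutatorMulLeft F r (commutatorMulLeft F s θ) =
      commutatorMulLeft F s (commutatorMulLeft F r θ) := by
  ext x
  simp only [commutatorMulLeft_apply, LinearMap.sub_apply, Module.End.mul_apply,
    LinearMap.mulLeft_apply, map_sub]
  ring_nf

theorem commutatorMulLeft_mul_left (r s : R) (θ : Module.End F R) :
    commutatorMulLeft F (r * s) θ =
      commutatorMulLeft F r θ * mulLeft F s + mulLeft F r * commutatorMulLeft F s θ := by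
  simp only [commutatorMulLeft_apply, LinearMap.mulLeft_mul, ← Module.End.mul_eq_comp, mul_sub,
    sub_mul, mul_assoc]
  abel

theorem Derivation.commutatorMulLeft_coe (δ : Derivation F R R) (r : R) :
    commutatorMulLeft F r (δ : Module.End F R) = mulLeft F (δ r) := by
  ext x
  simp [Derivation.leibniz, mul_comm]

variable (F) in
def iteratedCommutator : List R → Module.End F R →ₗ[F] Module.End F R
  | [] => LinearMap.id
  | r :: l => iteratedCommutator l ∘ₗ commutatorMulLeft F r

@[simp]
theorem iteratedCommutator_nil (θ : Module.End F R) : iteratedCommutator F [] θ = θ :=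
  rfl

@[simp]
theorem iteratedCommutator_cons (r : R) (l : List R) (θ : Module.End F R) :
    iteratedCommutator F (r :: l) θ = iteratedCommutator F l (commutatorMulLeft F r θ) :=
  rfl

theorem iteratedCommutator_mul_mulLeft (l : List R) (s : R) (θ : Module.End F R) :
    iteratedCommutator F l (θ * mulLeft F s) = iteratedCommutator F l θ * mulLeft F s := by
  induction l generalizing θ with
  | nil => rfl
  | cons r l ih => simp only [iteratedCommutator_cons, commutatorMulLeft_mul_mulLeft, ih]

theorem iteratedCommutator_mulLeft_mul (l : List R) (s : R) (θ : Module.End F R) :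
    iteratedCommutator F l (mulLeft F s * θ) = mulLeft F s * iteratedCommutator F l θ := by
  induction l generalizing θ with
  | nil => rfl
  | cons r l ih => simp only [iteratedCommutator_cons, commutatorMulLeft_mulLeft_mul, ih]

theorem List.Perm.iteratedCommutator_eq {l l' : List R} (h : l.Perm l') :
    iteratedCommutator F l = iteratedCommutator F l' := by
  induction h with
  | nil => rfl
  | cons r _ ih => simp only [iteratedCommutator, ih]
  | swap r s l => ext1 θ; exact congrArg _ (commutatorMulLeft_comm r s θ)
  | trans _ _ ih₁ ih₂ => rw [ih₁, ih₂]

variable (F R) in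
def diffOpsOfOrderLE : ℕ → Submodule F (Module.End F R)
  | 0 => ⨅ r : R, LinearMap.ker (commutatorMulLeft F r)
  | j + 1 => ⨅ r : R, (diffOpsOfOrderLE j).comap (commutatorMulLeft F r)

theorem mem_diffOpsOfOrderLE_zero {θ : Module.End F R} :
    θ ∈ diffOpsOfOrderLE F R 0 ↔ ∀ r, commutatorMulLeft F r θ = 0 := by
  simp only [diffOpsOfOrderLE, Submodule.mem_iInf, LinearMap.mem_ker]

theorem mem_diffOpsOfOrderLE_succ {j : ℕ} {θ : Module.End F R} :
    θ ∈ diffOpsOfOrderLE F R (j + 1) ↔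
      ∀ r, commutatorMulLeft F r θ ∈ diffOpsOfOrderLE F R j := by
  simp only [diffOpsOfOrderLE, Submodule.mem_iInf, Submodule.mem_comap]

theorem mem_diffOpsOfOrderLE_iff {j : ℕ} {θ : Module.End F R} :
    θ ∈ diffOpsOfOrderLE F R j ↔ IsDiffOpOfOrderLE F R j θ := by
  induction j generalizing θ with
  | zero => exact mem_diffOpsOfOrderLE_zero
  | succ j ih => simp only [mem_diffOpsOfOrderLE_succ, ih]; rfl

theorem mulLeft_mem_diffOpsOfOrderLE_zero (r : R) : mulLeft F r ∈ diffOpsOfOrderLE F R 0 :=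
  mem_diffOpsOfOrderLE_zero.mpr fun s => commutatorMulLeft_mulLeft s r

theorem mem_diffOpsOfOrderLE_zero_iff_eq_mulLeft {θ : Module.End F R} :
    θ ∈ diffOpsOfOrderLE F R 0 ↔ θ = mulLeft F (θ 1) := by
  refine ⟨fun h => ?_, fun h => h ▸ mulLeft_mem_diffOpsOfOrderLE_zero _⟩
  ext x
  have := congrArg (· 1) (mem_diffOpsOfOrderLE_zero.mp h x)
  simpa [sub_eq_zero, mul_comm] using this

theorem apply_eq_mul_apply_one_of_mem_diffOpsOfOrderLE_zero {θ : Module.End F R}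
    (h : θ ∈ diffOpsOfOrderLE F R 0) (x : R) : θ x = x * θ 1 :=
  (LinearMap.congr_fun (mem_diffOpsOfOrderLE_zero_iff_eq_mulLeft.mp h) x).trans (mul_comm _ _)

theorem diffOpsOfOrderLE_mono : Monotone (diffOpsOfOrderLE F R) := by
  refine monotone_nat_of_le_succ fun j θ hθ => ?_
  induction j generalizing θ with
  | zero =>
    exact mem_diffOpsOfOrderLE_succ.mpr fun r => mem_diffOpsOfOrderLE_zero.mp hθ r ▸ zero_mem _
  | succ j ih =>
    exact mem_diffOpsOfOrderLE_succ.mpr fun r => ih _ (mem_diffOpsOfOrderLE_succ.mp hθ r)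

theorem Derivation.coe_mem_diffOpsOfOrderLE_one (δ : Derivation F R R) :
    (δ : Module.End F R) ∈ diffOpsOfOrderLE F R 1 :=
  mem_diffOpsOfOrderLE_succ.mpr fun r => by
    rw [Derivation.commutatorMulLeft_coe]
    exact mulLeft_mem_diffOpsOfOrderLE_zero _

theorem mul_mem_diffOpsOfOrderLE {j k : ℕ} {θ φ : Module.End F R}
    (hθ : θ ∈ diffOpsOfOrderLE F R j) (hφ : φ ∈ diffOpsOfOrderLE F R k) :
    θ * φ ∈ diffOpsOfOrderLE F R (j + k) := by
  induction j generalizing k θ φ with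
  | zero =>
    induction k generalizing φ with
    | zero =>
      refine mem_diffOpsOfOrderLE_zero.mpr fun r => ?_
      rw [commutatorMulLeft_mul, mem_diffOpsOfOrderLE_zero.mp hθ, mem_diffOpsOfOrderLE_zero.mp hφ,
        mul_zero, zero_mul, add_zero]
    | succ k ih =>
      refine mem_diffOpsOfOrderLE_succ.mpr fun r => ?_
      rw [commutatorMulLeft_mul, mem_diffOpsOfOrderLE_zero.mp hθ, zero_mul, add_zero]
      exact ih (mem_diffOpsOfOrderLE_succ.mp hφ r)
  | succ j ihj =>
    induction k generalizing φ with
    | zero =>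
      refine mem_diffOpsOfOrderLE_succ.mpr fun r => ?_
      rw [commutatorMulLeft_mul, mem_diffOpsOfOrderLE_zero.mp hφ, mul_zero, zero_add]
      exact ihj (mem_diffOpsOfOrderLE_succ.mp hθ r) hφ
    | succ k ihk =>
      refine mem_diffOpsOfOrderLE_succ.mpr fun r => ?_
      rw [commutatorMulLeft_mul]
      refine add_mem ?_ ?_
      · exact ihk (mem_diffOpsOfOrderLE_succ.mp hφ r)
      · convert ihj (mem_diffOpsOfOrderLE_succ.mp hθ r) hφ using 2
        exact Nat.succ_add j k

theorem iteratedCommutator_mem_diffOpsOfOrderLE {k : ℕ} (l : List R) {θ : Module.End F R}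
    (h : θ ∈ diffOpsOfOrderLE F R (k + l.length)) :
    iteratedCommutator F l θ ∈ diffOpsOfOrderLE F R k := by
  induction l generalizing θ with
  | nil => exact h
  | cons r l ih => exact ih (mem_diffOpsOfOrderLE_succ.mp h r)

variable (F R) in
def mulLeftsAndDerivations : Set (Module.End F R) :=
  (Set.range fun r : R => mulLeft F r) ∪
    Set.range fun δ : Derivation F R R => (δ : Module.End F R)

variable (F R) in
def diffOps : Subalgebra F (Module.End F R) where
  carrier := {θ | ∃ j, IsDiffOpOfOrderLE F R j θ}
  mul_mem' := by
    rintro θ φ ⟨j, hθ⟩ ⟨k, hφ⟩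
    exact ⟨j + k, mem_diffOpsOfOrderLE_iff.mp (mul_mem_diffOpsOfOrderLE
      (mem_diffOpsOfOrderLE_iff.mpr hθ) (mem_diffOpsOfOrderLE_iff.mpr hφ))⟩
  add_mem' := by
    rintro θ φ ⟨j, hθ⟩ ⟨k, hφ⟩
    refine ⟨max j k, mem_diffOpsOfOrderLE_iff.mp (add_mem ?_ ?_)⟩
    · exact diffOpsOfOrderLE_mono (le_max_left j k) (mem_diffOpsOfOrderLE_iff.mpr hθ)
    · exact diffOpsOfOrderLE_mono (le_max_right j k) (mem_diffOpsOfOrderLE_iff.mpr hφ)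
  algebraMap_mem' c := by
    refine ⟨0, mem_diffOpsOfOrderLE_iff.mp ?_⟩
    convert mulLeft_mem_diffOpsOfOrderLE_zero (F := F) (algebraMap F R c)
    ext x
    simp [Module.algebraMap_end_apply, Algebra.smul_def]

theorem adjoin_le_diffOps : Algebra.adjoin F (mulLeftsAndDerivations F R) ≤ diffOps F R := by
  refine Algebra.adjoin_le ?_
  rintro _ (⟨r, rfl⟩ | ⟨δ, rfl⟩)
  · exact ⟨0, mem_diffOpsOfOrderLE_iff.mp (mulLeft_mem_diffOpsOfOrderLE_zero r)⟩
  · exact ⟨1, mem_diffOpsOfOrderLE_iff.mp δ.coe_mem_diffOpsOfOrderLE_one⟩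

section MultiDerivation

variable {M : Type*} [AddCommGroup M] [Module R M] [Module F M]

variable (F) in
structure IsMultiDerivation {j : ℕ} (φ : (Fin j → R) → M) : Prop where
  map_add (v : Fin j → R) (i : Fin j) (a b : R) :
    φ (Function.update v i (a + b)) = φ (Function.update v i a) + φ (Function.update v i b)
  map_smul (v : Fin j → R) (i : Fin j) (c : F) (a : R) :
    φ (Function.update v i (c • a)) = c • φ (Function.update v i a)
  leibniz (v : Fin j → R) (i : Fin j) (a b : R) :
    φ (Function.update v i (a * b)) =
      a • φ (Function.update v i b) + b • φ (Function.update v i a)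

namespace IsMultiDerivation

theorem comp [IsScalarTower F R M] {N : Type*} [AddCommGroup N] [Module R N] [Module F N]
    [IsScalarTower F R N] {j : ℕ} {φ : (Fin j → R) → M}
    (h : IsMultiDerivation F φ) (f : M →ₗ[R] N) : IsMultiDerivation F (f ∘ φ) where
  map_add v i a b := by simp only [Function.comp_apply, h.map_add, f.map_add]
  map_smul v i c a := by simp only [Function.comp_apply, h.map_smul, f.map_smul_of_tower]
  leibniz v i a b := by simp only [Function.comp_apply, h.leibniz, f.map_add, f.map_smul]

def headDerivation {j : ℕ} {φ : (Fin (j + 1) → R) → M} (h : IsMultiDerivation F φ)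
    (w : Fin j → R) : Derivation F R M :=
  Derivation.mk'
    { toFun := fun r => φ (Fin.cons r w)
      map_add' := fun a b => by
        simpa only [Fin.update_cons_zero] using h.map_add (Fin.cons 0 w) 0 a b
      map_smul' := fun c a => by
        simpa only [Fin.update_cons_zero, RingHom.id_apply] using
          h.map_smul (Fin.cons 0 w) 0 c a }
    fun a b => by
      simpa only [LinearMap.coe_mk, AddHom.coe_mk, Fin.update_cons_zero] using
        h.leibniz (Fin.cons 0 w) 0 a b

@[simp]
theorem headDerivation_apply {j : ℕ} {φ : (Fin (j + 1) → R) → M} (h : IsMultiDerivation F φ)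
    (w : Fin j → R) (r : R) : h.headDerivation w r = φ (Fin.cons r w) :=
  rfl

theorem isMultiDerivation_headDerivation [IsScalarTower F R M] {j : ℕ}
    {φ : (Fin (j + 1) → R) → M} (h : IsMultiDerivation F φ) :
    IsMultiDerivation F h.headDerivation where
  map_add w i a b := by
    ext r
    simp only [headDerivation_apply, Derivation.add_apply, Fin.cons_update, h.map_add]
  map_smul w i c a := by
    ext r
    simp only [headDerivation_apply, Derivation.smul_apply, Fin.cons_update, h.map_smul]
  leibniz w i a b := by
    ext r
    simp only [headDerivation_apply, Derivation.add_apply, Derivation.smul_apply, Fin.cons_update,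
      h.leibniz]

end IsMultiDerivation

end MultiDerivation

def symbol {j : ℕ} : Module.End F R →ₗ[F] (Fin j → R) → R :=
  LinearMap.pi fun v => LinearMap.applyₗ 1 ∘ₗ iteratedCommutator F (List.ofFn v)

theorem symbol_apply {j : ℕ} (θ : Module.End F R) (v : Fin j → R) :
    symbol θ v = iteratedCommutator F (List.ofFn v) θ 1 :=
  rfl

theorem symbol_cons {j : ℕ} (θ : Module.End F R) (a : R) (w : Fin j → R) :
    symbol θ (Fin.cons a w) = symbol (commutatorMulLeft F a θ) w := by
  simp only [symbol_apply, List.ofFn_cons, iteratedCommutator_cons]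

theorem symbol_eq_symbol_removeNth {j : ℕ} (θ : Module.End F R) (v : Fin (j + 1) → R)
    (i : Fin (j + 1)) :
    symbol θ v = symbol (commutatorMulLeft F (v i) θ) (Fin.removeNth i v) := by
  rw [symbol_apply, (List.ofFn_perm_cons_removeNth v i).iteratedCommutator_eq]
  rfl

theorem symbol_mulLeft_mul {j : ℕ} (a : R) (θ : Module.End F R) (w : Fin j → R) :
    symbol (mulLeft F a * θ) w = a * symbol θ w := by
  rw [symbol_apply, iteratedCommutator_mulLeft_mul]
  rfl

theorem symbol_mul_mulLeft {j : ℕ} {θ : Module.End F R} (hθ : θ ∈ diffOpsOfOrderLE F R j)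
    (a : R) (w : Fin j → R) : symbol (θ * mulLeft F a) w = a * symbol θ w := by
  have h0 : iteratedCommutator F (List.ofFn w) θ ∈ diffOpsOfOrderLE F R 0 :=
    iteratedCommutator_mem_diffOpsOfOrderLE _ (by rwa [List.length_ofFn, zero_add])
  rw [symbol_apply, iteratedCommutator_mul_mulLeft, Module.End.mul_apply, LinearMap.mulLeft_apply,
    mul_one, apply_eq_mul_apply_one_of_mem_diffOpsOfOrderLE_zero h0, symbol_apply]

theorem mem_diffOpsOfOrderLE_of_symbol_eq_zero {j : ℕ} {θ : Module.End F R}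
    (hθ : θ ∈ diffOpsOfOrderLE F R (j + 1)) (h : ∀ v : Fin (j + 1) → R, symbol θ v = 0) :
    θ ∈ diffOpsOfOrderLE F R j := by
  induction j generalizing θ with
  | zero =>
    refine mem_diffOpsOfOrderLE_zero.mpr fun r => ?_
    rw [mem_diffOpsOfOrderLE_zero_iff_eq_mulLeft.mp (mem_diffOpsOfOrderLE_succ.mp hθ r)]
    have : commutatorMulLeft F r θ 1 = symbol θ (Fin.cons r Fin.elim0) :=
      (symbol_cons θ r Fin.elim0).symm
    rw [this, h, LinearMap.mulLeft_zero_eq_zero]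
  | succ j ih =>
    refine mem_diffOpsOfOrderLE_succ.mpr fun r =>
      ih (mem_diffOpsOfOrderLE_succ.mp hθ r) fun w => ?_
    rw [← symbol_cons]
    exact h _

theorem symbol_mul_derivation_cons {j : ℕ} {θ : Module.End F R}
    (hθ : θ ∈ diffOpsOfOrderLE F R j) (δ : Derivation F R R) (a : R) (w : Fin j → R) :
    symbol (θ * (δ : Module.End F R)) (Fin.cons a w) =
      δ a * symbol θ w + symbol (commutatorMulLeft F a θ * (δ : Module.End F R)) w := by
  rw [symbol_cons, commutatorMulLeft_mul, Derivation.commutatorMulLeft_coe, map_add,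
    Pi.add_apply, symbol_mul_mulLeft hθ]

theorem symbol_mul_derivation {j : ℕ} {θ : Module.End F R} (hθ : θ ∈ diffOpsOfOrderLE F R j)
    (δ : Derivation F R R) (v : Fin (j + 1) → R) :
    symbol (θ * (δ : Module.End F R)) v = ∑ k, δ (v k) * symbol θ (Fin.removeNth k v) := by
  induction j generalizing θ with
  | zero =>
    cases v using Fin.consCases with | cons a w => ?_
    simp [symbol_mul_derivation_cons hθ, symbol_apply]
  | succ j ih =>
    cases v using Fin.consCases with | cons a w => ?_
    rw [symbol_mul_derivation_cons hθ, ih (mem_diffOpsOfOrderLE_succ.mp hθ a)]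
    conv_rhs => rw [Fin.sum_univ_succ]
    simp only [Fin.cons_zero, Fin.removeNth_zero, Fin.tail_cons, Fin.cons_succ,
      Fin.removeNth_succ_cons, symbol_cons]

theorem symmetrize_symbol (j : ℕ) (θ : Module.End F R) :
    symmetrize j (symbol θ) = j.factorial • (symbol θ : (Fin j → R) → R) := by
  induction j generalizing θ with
  | zero => simp [symmetrize]
  | succ j ih =>
    funext v
    have hcons (a : R) :
        (fun w : Fin j → R => symbol θ (Fin.cons a w)) = symbol (commutatorMulLeft F a θ) :=
      funext (symbol_cons θ a)
    simp only [symmetrize, hcons, ih, Pi.smul_apply, ← symbol_eq_symbol_removeNth,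
      Finset.sum_const, Finset.card_univ, Fintype.card_fin, smul_smul, Nat.factorial_succ]

theorem symbol_isMultiDerivation {j : ℕ} {θ : Module.End F R}
    (hθ : θ ∈ diffOpsOfOrderLE F R (j + 1)) :
    IsMultiDerivation F (symbol θ : (Fin (j + 1) → R) → R) := by
  have key (v : Fin (j + 1) → R) (i : Fin (j + 1)) (x : R) :
      symbol θ (Function.update v i x) =
        symbol (commutatorMulLeft F x θ) (Fin.removeNth i v) := by
    rw [symbol_eq_symbol_removeNth _ _ i, Function.update_self, Fin.removeNth_update]
  refine ⟨fun v i a b => ?_, fun v i c a => ?_, fun v i a b => ?_⟩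
  · simp only [key, map_add, LinearMap.add_apply, Pi.add_apply]
  · simp only [key, map_smul, LinearMap.smul_apply, Pi.smul_apply]
  · rw [key, key, key, commutatorMulLeft_mul_left, map_add, Pi.add_apply,
      symbol_mul_mulLeft (mem_diffOpsOfOrderLE_succ.mp hθ a), symbol_mulLeft_mul, smul_eq_mul,
      smul_eq_mul, add_comm]

theorem exists_mem_adjoin_symbol_eq_symmetrize [Module.Finite R (Derivation F R R)]
    [Module.Projective R (Derivation F R R)] (j : ℕ) {φ : (Fin j → R) → R}
    (hφ : IsMultiDerivation F φ) :
    ∃ Θ ∈ Algebra.adjoin F (mulLeftsAndDerivations F R),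
      Θ ∈ diffOpsOfOrderLE F R j ∧ (symbol Θ : (Fin j → R) → R) = symmetrize j φ := by
  induction j with
  | zero =>
    refine ⟨mulLeft F (φ Fin.elim0), Algebra.subset_adjoin (Or.inl ⟨_, rfl⟩),
      mulLeft_mem_diffOpsOfOrderLE_zero _, funext fun v => ?_⟩
    rw [Subsingleton.elim v Fin.elim0]
    exact mul_one _
  | succ j ih =>
    obtain ⟨N, f, g, hfg⟩ :=
      Module.Finite.exists_sum_smul_eq_of_projective R (Derivation F R R)
    have hφ_cons (r : R) (w : Fin j → R) :
        φ (Fin.cons r w) = ∑ i, g i r • (f i ∘ hφ.headDerivation) w := by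
      rw [← hφ.headDerivation_apply, ← hfg (hφ.headDerivation w),
        ← Derivation.coeFnAddMonoidHom_apply, map_sum, Finset.sum_apply]
      simp only [Derivation.coeFnAddMonoidHom_apply, Derivation.smul_apply, Function.comp_apply,
        smul_eq_mul, mul_comm]
    choose Θ hΘadj hΘord hΘsym using fun i =>
      ih (hφ.isMultiDerivation_headDerivation.comp (f i))
    refine ⟨∑ i, Θ i * (g i : Module.End F R),
      sum_mem fun i _ => mul_mem (hΘadj i) (Algebra.subset_adjoin (Or.inr ⟨g i, rfl⟩)),
      sum_mem fun i _ => mul_mem_diffOpsOfOrderLE (hΘord i) (g i).coe_mem_diffOpsOfOrderLE_one,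
      funext fun v => ?_⟩
    calc symbol (∑ i, Θ i * (g i : Module.End F R)) v
        = ∑ i, ∑ k, g i (v k) * symbol (Θ i) (Fin.removeNth k v) := by
          simp only [map_sum, Finset.sum_apply, symbol_mul_derivation (hΘord _)]
      _ = ∑ k, ∑ i, g i (v k) •
            symmetrize j (f i ∘ hφ.headDerivation) (Fin.removeNth k v) := by
          rw [Finset.sum_comm]
          simp only [hΘsym, smul_eq_mul]
      _ = symmetrize (j + 1) φ v := by
          simp only [symmetrize, hφ_cons, symmetrize_sum_smul]

theorem diffOpsOfOrderLE_le_adjoin [CharZero F] [Module.Finite R (Derivation F R R)]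
    [Module.Projective R (Derivation F R R)] (j : ℕ) :
    diffOpsOfOrderLE F R j ≤ (Algebra.adjoin F (mulLeftsAndDerivations F R)).toSubmodule := by
  induction j with
  | zero =>
    intro θ hθ
    rw [mem_diffOpsOfOrderLE_zero_iff_eq_mulLeft.mp hθ]
    exact Algebra.subset_adjoin (Or.inl ⟨_, rfl⟩)
  | succ j ih =>
    intro θ hθ
    obtain ⟨Θ, hΘadj, hΘord, hΘsym⟩ :=
      exists_mem_adjoin_symbol_eq_symmetrize (j + 1) (symbol_isMultiDerivation hθ)
    rw [symmetrize_symbol] at hΘsym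
    have hfac : ((j + 1).factorial : F) ≠ 0 := Nat.cast_ne_zero.mpr (Nat.factorial_ne_zero _)
    set c : F := ((j + 1).factorial : F)⁻¹
    have hrem : θ - c • Θ ∈ diffOpsOfOrderLE F R j := by
      refine mem_diffOpsOfOrderLE_of_symbol_eq_zero (sub_mem hθ (Submodule.smul_mem _ c hΘord))
        fun v => ?_
      rw [map_sub, map_smul, hΘsym, Pi.sub_apply, Pi.smul_apply, Pi.smul_apply,
        ← Nat.cast_smul_eq_nsmul F, inv_smul_smul₀ hfac, sub_self]
    simpa using add_mem (ih hrem) (Subalgebra.smul_mem _ hΘadj c)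

theorem diffOps_le_adjoin [CharZero F] [Module.Finite R (Derivation F R R)]
    [Module.Projective R (Derivation F R R)] :
    diffOps F R ≤ Algebra.adjoin F (mulLeftsAndDerivations F R) := by
  rintro θ ⟨j, hθ⟩
  exact diffOpsOfOrderLE_le_adjoin j (mem_diffOpsOfOrderLE_iff.mpr hθ)

end

/-- If `R` satisfies Hypothesis H over a field `F` of characteristic `0`, then the set
`D(R, F)` of `F`-linear differential operators of finite order on `R` equals the `F`-subalgebra
of `End_F(R)` generated by the multiplication operators together with the `F`-linear
derivations of `R`. -/
theorem diffOps_eq_adjoin_derivations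
    {F R : Type*} [Field F] [CommRing R] [Algebra F R] {n : ℕ}
    (hH : HypothesisH F R n) :
    {θ : Module.End F R | ∃ j, IsDiffOpOfOrderLE F R j θ} =
      ↑(Algebra.adjoin F
        ((Set.range fun r : R => (LinearMap.mulLeft F r : Module.End F R)) ∪
          (Set.range fun δ : Derivation F R R => (δ : R →ₗ[F] R)))) := by
  have := hH.charZero
  have := hH.der_finite
  have := hH.der_projective
  exact congrArg SetLike.coe (le_antisymm diffOps_le_adjoin adjoin_le_diffOps)
end
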